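/- For every pair of natural numbers r and k with r, k ≥ 1, and every coloring of the natural numbers with r colors (i.e., every function c : ℕ → Fin r), there exist natural numbers a and d with d ≥ 1 such that the arithmetic progression {a, a + d, a + 2d, …, a + (k−1)d} is monochromatic, i.e., c(a + i·d) = c(a) for all 0 ≤ i ≤ k−1. -/

import Mathlib

theorem vdW_classical_general (r k : ℕ) (c : ℕ → Fin r) :
    ∃ a d : ℕ, 1 ≤ d ∧ ∀ i : ℕ, i ≤ k - 1 → c (a + i * d) = c a := by
  obtain ⟨d, hd, a, col, hmono⟩ :=
    Combinatorics.exists_mono_homothetic_copy (Finset.Iic (k - 1)) c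
  have hprog : ∀ i ≤ k - 1, c (a + i * d) = col := fun i hi => by
    simpa [add_comm, mul_comm] using hmono i (Finset.mem_Iic.mpr hi)
  refine ⟨a, d, hd, fun i hi => ?_⟩
  simpa using (hprog i hi).trans (hprog 0 (Nat.zero_le _)).symm

/-- Classical van der Waerden theorem: for every `r`-coloring of ℕ there is a
monochromatic arithmetic progression of length `k`. -/
theorem vdW_classical (r k : ℕ) (hr : 1 ≤ r) (hk : 1 ≤ k) (c : ℕ → Fin r) :
    ∃ a d : ℕ, 1 ≤ d ∧ ∀ i : ℕ, i ≤ k - 1 → c (a + i * d) = c a :=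
  vdW_classical_general r k c
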